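/- With the notation of the previous statement, Σ_{n=1}^{∞} (tⁿ/n!)·‖Gₙ - Fₙ - H′ₙ‖ ≤ ‖O‖ · e^{2t‖H‖} · (e^{2t‖H′‖} - 1 - 2t‖H′‖) for t ≥ 0. -/

import Mathlib

/-!
With `D_N = G_N - F_N - H'_N`, expanding the brackets gives the recursion
`D_{N+1} = [H + H', D_N] + [H', H'_N]`. Since `‖[X, Y]‖ ≤ 2‖X‖‖Y‖` and
`‖H'_N‖ ≤ 2N‖H'‖(2‖H‖)^{N-1}‖O‖`, induction gives
`‖D_N‖ ≤ 2^N ‖O‖ ((‖H‖+‖H'‖)^N - ‖H‖^N - N‖H'‖‖H‖^{N-1})`, and summing this bound against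
`t^N / N!` produces three exponential series.
-/

open Matrix NormedSpace ComplexOrder

noncomputable def opNorm {n : ℕ} (A : Matrix (Fin n) (Fin n) ℂ) : ℝ :=
  ‖(Matrix.toEuclideanCLM (𝕜 := ℂ) A : EuclideanSpace ℂ (Fin n) →L[ℂ] EuclideanSpace ℂ (Fin n))‖

noncomputable def traceNorm {n : ℕ} (A : Matrix (Fin n) (Fin n) ℂ) : ℝ :=
  (((Matrix.posSemidef_conjTranspose_mul_self A).1.eigenvectorUnitary.1 *
    diagonal ((fun x : ℝ => (x : ℂ)) ∘ (√·) ∘ (Matrix.posSemidef_conjTranspose_mul_self A).1.eigenvalues) *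
    (star (Matrix.posSemidef_conjTranspose_mul_self A).1.eigenvectorUnitary : Matrix (Fin n) (Fin n) ℂ)).trace).re

def IsDensity {n : ℕ} (ρ : Matrix (Fin n) (Fin n) ℂ) : Prop := ρ.PosSemidef ∧ ρ.trace = 1

/-- Left adjoint action: ad_H(X) = [H, X]. -/
noncomputable def adL {n : ℕ} (H : Matrix (Fin n) (Fin n) ℂ) : Matrix (Fin n) (Fin n) ℂ → Matrix (Fin n) (Fin n) ℂ :=
  fun X => H * X - X * H

/-- Right-nesting action: X ↦ [X, H]. -/
noncomputable def adR {n : ℕ} (H : Matrix (Fin n) (Fin n) ℂ) : Matrix (Fin n) (Fin n) ℂ → Matrix (Fin n) (Fin n) ℂ :=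
  fun X => X * H - H * X

open Finset Nat

attribute [local instance] LieRing.ofAssociativeRing

section LieRing

variable {L : Type*} [LieRing L]

/-- The paper's `H'_N` (with `x = H`, `δ = H'`, `y = O`): the part of `ad_{x+δ}^N y` that is
linear in `δ`. -/
def iterateLieFirstOrder (x δ y : L) (N : ℕ) : L :=
  ∑ l ∈ range N, (⁅x, ·⁆)^[l] ⁅δ, (⁅x, ·⁆)^[N - 1 - l] y⁆

theorem iterateLieFirstOrder_succ (x δ y : L) (N : ℕ) :
    iterateLieFirstOrder x δ y (N + 1) =
      ⁅x, iterateLieFirstOrder x δ y N⁆ + ⁅δ, (⁅x, ·⁆)^[N] y⁆ := by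
  rw [iterateLieFirstOrder, sum_range_succ', iterateLieFirstOrder, lie_sum]
  congr 1
  refine sum_congr rfl fun l hl => ?_
  rw [Function.iterate_succ_apply', show N + 1 - 1 - (l + 1) = N - 1 - l by omega]

theorem iterateLie_add_sub_firstOrder_succ (x δ y : L) (N : ℕ) :
    (⁅x + δ, ·⁆)^[N + 1] y - (⁅x, ·⁆)^[N + 1] y - iterateLieFirstOrder x δ y (N + 1) =
      ⁅x + δ, (⁅x + δ, ·⁆)^[N] y - (⁅x, ·⁆)^[N] y - iterateLieFirstOrder x δ y N⁆ +
        ⁅δ, iterateLieFirstOrder x δ y N⁆ := by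
  simp only [Function.iterate_succ_apply', iterateLieFirstOrder_succ, lie_sub, add_lie]
  abel

end LieRing

section NormedRing

variable {R : Type*} [NormedRing R]

theorem norm_lie_le (x y : R) : ‖⁅x, y⁆‖ ≤ 2 * ‖x‖ * ‖y‖ :=
  calc ‖⁅x, y⁆‖ ≤ ‖x * y‖ + ‖y * x‖ := by rw [Ring.lie_def]; exact norm_sub_le _ _
    _ ≤ ‖x‖ * ‖y‖ + ‖y‖ * ‖x‖ := add_le_add (norm_mul_le _ _) (norm_mul_le _ _)
    _ = 2 * ‖x‖ * ‖y‖ := by ring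

theorem norm_iterate_lie_le (x y : R) (k : ℕ) :
    ‖(⁅x, ·⁆)^[k] y‖ ≤ (2 * ‖x‖) ^ k * ‖y‖ := by
  induction k with
  | zero => simp
  | succ k ih =>
    rw [Function.iterate_succ_apply', _root_.pow_succ', mul_assoc]
    exact (norm_lie_le _ _).trans (by gcongr)

theorem norm_iterateLieFirstOrder_le (x δ y : R) (N : ℕ) :
    ‖iterateLieFirstOrder x δ y N‖ ≤ N * (2 * ‖δ‖) * (2 * ‖x‖) ^ (N - 1) * ‖y‖ := by
  calc ‖iterateLieFirstOrder x δ y N‖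
      ≤ ∑ l ∈ range N, ‖(⁅x, ·⁆)^[l] ⁅δ, (⁅x, ·⁆)^[N - 1 - l] y⁆‖ := norm_sum_le _ _
    _ ≤ ∑ l ∈ range N, (2 * ‖x‖) ^ l * (2 * ‖δ‖ * ((2 * ‖x‖) ^ (N - 1 - l) * ‖y‖)) := by
        gcongr with l
        refine (norm_iterate_lie_le _ _ _).trans ?_
        gcongr
        exact (norm_lie_le _ _).trans (by gcongr; exact norm_iterate_lie_le _ _ _)
    _ = ∑ l ∈ range N, 2 * ‖δ‖ * (2 * ‖x‖) ^ (N - 1) * ‖y‖ := by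
        refine sum_congr rfl fun l hl => ?_
        rw [← Nat.add_sub_of_le (Nat.le_sub_one_of_lt (mem_range.mp hl)), pow_add,
          Nat.add_sub_cancel_left]
        ring
    _ = N * (2 * ‖δ‖) * (2 * ‖x‖) ^ (N - 1) * ‖y‖ := by
        rw [sum_const, card_range, nsmul_eq_mul]; ring

theorem norm_iterateLie_add_sub_firstOrder_le (x δ y : R) (N : ℕ) :
    ‖(⁅x + δ, ·⁆)^[N] y - (⁅x, ·⁆)^[N] y - iterateLieFirstOrder x δ y N‖ ≤
      2 ^ N * ‖y‖ * ((‖x‖ + ‖δ‖) ^ N - ‖x‖ ^ N - N * ‖δ‖ * ‖x‖ ^ (N - 1)) := by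
  induction N with
  | zero => simp [iterateLieFirstOrder]
  | succ N ih =>
    rw [iterateLie_add_sub_firstOrder_succ]
    calc _ ≤ 2 * ‖x + δ‖ * ‖(⁅x + δ, ·⁆)^[N] y - (⁅x, ·⁆)^[N] y - iterateLieFirstOrder x δ y N‖
            + 2 * ‖δ‖ * ‖iterateLieFirstOrder x δ y N‖ :=
          (norm_add_le _ _).trans (add_le_add (norm_lie_le _ _) (norm_lie_le _ _))
      _ ≤ 2 * (‖x‖ + ‖δ‖) * (2 ^ N * ‖y‖ * ((‖x‖ + ‖δ‖) ^ N - ‖x‖ ^ N - N * ‖δ‖ * ‖x‖ ^ (N - 1)))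
            + 2 * ‖δ‖ * (N * (2 * ‖δ‖) * (2 * ‖x‖) ^ (N - 1) * ‖y‖) := by
          gcongr
          · exact norm_add_le _ _
          · exact norm_iterateLieFirstOrder_le _ _ _ _
      _ = _ := by
          rcases N with _ | N
          · simp
          · simp only [Nat.add_sub_cancel]; push_cast; ring

end NormedRing

section ExpSeries

open Real

theorem Real.hasSum_pow_div_factorial (x : ℝ) : HasSum (fun N => x ^ N / N !) (exp x) := by
  rw [exp_eq_exp_ℝ]; exact NormedSpace.expSeries_div_hasSum_exp x

theorem Real.hasSum_mul_pow_pred_div_factorial (x : ℝ) :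
    HasSum (fun N => N * x ^ (N - 1) / N !) (exp x) := by
  refine (hasSum_nat_add_iff' 1).mp ?_
  have hshift :
      (fun N => ((N + 1 : ℕ) : ℝ) * x ^ (N + 1 - 1) / (N + 1)!) = fun N => x ^ N / N ! := by
    ext N
    rw [Nat.add_sub_cancel, factorial_succ]
    push_cast
    field_simp
  rw [hshift, range_one, sum_singleton, cast_zero, zero_mul, zero_div, sub_zero]
  exact hasSum_pow_div_factorial x

theorem Real.hasSum_exp_remainder (a b c t : ℝ) :
    HasSum (fun N => t ^ N / N ! * (2 ^ N * c * ((a + b) ^ N - a ^ N - N * b * a ^ (N - 1))))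
      (c * exp (2 * t * a) * (exp (2 * t * b) - 1 - 2 * t * b)) := by
  have h := (((hasSum_pow_div_factorial (2 * t * (a + b))).sub
    (hasSum_pow_div_factorial (2 * t * a))).sub
    ((hasSum_mul_pow_pred_div_factorial (2 * t * a)).mul_left (2 * t * b))).mul_left c
  have hterm : (fun N => t ^ N / N ! * (2 ^ N * c * ((a + b) ^ N - a ^ N - N * b * a ^ (N - 1)))) =
      fun N => c * ((2 * t * (a + b)) ^ N / (N ! : ℝ) - (2 * t * a) ^ N / (N ! : ℝ) -
        2 * t * b * (N * (2 * t * a) ^ (N - 1) / (N ! : ℝ))) := by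
    ext N
    rcases N with _ | N
    · simp
    · simp only [Nat.add_sub_cancel, mul_pow, _root_.pow_succ]
      ring
  have hvalue : c * exp (2 * t * a) * (exp (2 * t * b) - 1 - 2 * t * b) =
      c * (exp (2 * t * (a + b)) - exp (2 * t * a) - 2 * t * b * exp (2 * t * a)) := by
    rw [mul_add, exp_add]; ring
  rw [hterm, hvalue]
  exact h

end ExpSeries

open scoped Matrix.Norms.L2Operator in
/-- Σ_{N≥1} (t^N/N!)·‖G_N - F_N - H′_N‖ ≤ ‖O‖ e^{2t‖H‖}(e^{2t‖H′‖} - 1 - 2t‖H′‖)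
for t ≥ 0.  (The N = 0 term of the series below vanishes, since G₀ - F₀ - H′₀ = 0.) -/
theorem stmt12 {n : ℕ} (H H' O : Matrix (Fin n) (Fin n) ℂ) (t : ℝ) (ht : 0 ≤ t)
    (F G : ℕ → Matrix (Fin n) (Fin n) ℂ)
    (hF0 : F 0 = O) (hFs : ∀ k, F (k + 1) = H * F k - F k * H)
    (hG0 : G 0 = O) (hGs : ∀ k, G (k + 1) = (H + H') * G k - G k * (H + H')) :
    ∑' N : ℕ, (t ^ N / (Nat.factorial N : ℝ)) *
        opNorm (G N - F N -
          ∑ l ∈ Finset.range N,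
            (adL H)^[l] (H' * ((adL H)^[N - 1 - l] O) - ((adL H)^[N - 1 - l] O) * H'))
      ≤ opNorm O * Real.exp (2 * t * opNorm H) *
          (Real.exp (2 * t * opNorm H') - 1 - 2 * t * opNorm H') := by
  have hF : ∀ N, F N = (⁅H, ·⁆)^[N] O := by
    intro N
    induction N with
    | zero => exact hF0
    | succ N ih => rw [hFs, Function.iterate_succ_apply', ← ih]; rfl
  have hG : ∀ N, G N = (⁅H + H', ·⁆)^[N] O := by
    intro N
    induction N with
    | zero => exact hG0
    | succ N ih => rw [hGs, Function.iterate_succ_apply', ← ih]; rfl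
  have hopNorm : ∀ A : Matrix (Fin n) (Fin n) ℂ, opNorm A = ‖A‖ := fun _ => rfl
  have hcorrection : ∀ N, ∑ l ∈ range N,
      (adL H)^[l] (H' * ((adL H)^[N - 1 - l] O) - ((adL H)^[N - 1 - l] O) * H') =
        iterateLieFirstOrder H H' O N := fun _ => rfl
  simp only [hopNorm, hcorrection]
  have hbound : ∀ N, t ^ N / (N ! : ℝ) * ‖G N - F N - iterateLieFirstOrder H H' O N‖ ≤
      t ^ N / N ! * (2 ^ N * ‖O‖ * ((‖H‖ + ‖H'‖) ^ N - ‖H‖ ^ N - N * ‖H'‖ * ‖H‖ ^ (N - 1))) := by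
    intro N
    rw [hF, hG]
    gcongr
    exact norm_iterateLie_add_sub_firstOrder_le H H' O N
  have hsum := Real.hasSum_exp_remainder ‖H‖ ‖H'‖ ‖O‖ t
  exact hasSum_le hbound
    (hsum.summable.of_nonneg_of_le (fun N => by positivity) hbound).hasSum hsum
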